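/- arXiv:1401.6901 — 8 statements merged into one kernel-verified Lean document; each statement's English description precedes it below -/
import Mathlib

section
/- Let p be a prime number and m a natural number, and for j ∈ ℕ write q_j := ⌊j / p^m⌋ (integer division). Then for all natural numbers k' and k'', writing k = k' + k'', one has padicValNat p (q_k!) ≤ padicValNat p (Nat.choose k k') + padicValNat p (q_{k'}!) + padicValNat p (q_{k''}!). (Equivalently, the level-m coefficient ⟨k choose k'⟩ := binom(k,k') · q_{k'}! · q_{k''}! / q_k! is a p-adic integer, i.e. lies in ℤ_(p).) -/
/-- The level-`m` coefficient `⟨k choose k'⟩ = binom(k,k')·q_{k'}!·q_{k''}!/q_k!`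
(with `k = k' + k''`, `q j = j / p^m`) is a `p`-adic integer, expressed via
`p`-adic valuations of the factorials involved. -/
theorem stmt_1 (p : ℕ) (hp : p.Prime) (m : ℕ) :
    ∀ k' k'' : ℕ,
      padicValNat p (Nat.factorial ((k' + k'') / p ^ m)) ≤
        padicValNat p (Nat.choose (k' + k'') k') +
          padicValNat p (Nat.factorial (k' / p ^ m)) +
          padicValNat p (Nat.factorial (k'' / p ^ m)) := by
  intro k' k''
  haveI : Fact p.Prime := ⟨hp⟩
  have hle : k' ≤ k' + k'' := Nat.le_add_right _ _
  -- factorial identity and valuation additivity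
  have hfact : Nat.choose (k' + k'') k' * Nat.factorial k' * Nat.factorial k''
      = Nat.factorial (k' + k'') := by
    have := Nat.choose_mul_factorial_mul_factorial hle
    simpa using this
  have hvalk : padicValNat p (Nat.factorial (k' + k''))
      = padicValNat p (Nat.choose (k' + k'') k') + padicValNat p (Nat.factorial k')
        + padicValNat p (Nat.factorial k'') := by
    rw [← hfact,
      padicValNat.mul (Nat.mul_ne_zero (Nat.choose_pos hle).ne' (Nat.factorial_ne_zero _))
        (Nat.factorial_ne_zero _),
      padicValNat.mul (Nat.choose_pos hle).ne' (Nat.factorial_ne_zero _)]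
  set b := Nat.log p (k' + k'') + 1 with hbdef
  set B := b + m with hBdef
  have hlog : ∀ n : ℕ, n ≤ k' + k'' → Nat.log p n < b := fun n hn =>
    Nat.lt_succ_of_le (Nat.log_mono_right hn)
  have hlogB : ∀ n : ℕ, n ≤ k' + k'' → Nat.log p n < B := fun n hn =>
    lt_of_lt_of_le (hlog n hn) (by omega)
  -- Legendre for the quotient factorials
  have hq : ∀ n : ℕ, n ≤ k' + k'' →
      padicValNat p (Nat.factorial (n / p ^ m))
        = ∑ i ∈ Finset.Ico 1 b, n / p ^ (m + i) := by
    intro n hn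
    rw [padicValNat_factorial (hlog (n / p ^ m) (le_trans (Nat.div_le_self _ _) hn))]
    refine Finset.sum_congr rfl fun i _ => ?_
    rw [Nat.div_div_eq_div_mul, ← pow_add]
  -- Legendre for the full factorials
  have hfull : ∀ n : ℕ, n ≤ k' + k'' →
      padicValNat p (Nat.factorial n) = ∑ i ∈ Finset.Ico 1 B, n / p ^ i := by
    intro n hn
    exact padicValNat_factorial (hlogB n hn)
  -- splitting the big sum
  have hsplit : ∀ n : ℕ, ∑ i ∈ Finset.Ico 1 B, n / p ^ i
      = (∑ i ∈ Finset.Ico 1 (1 + m), n / p ^ i) + ∑ i ∈ Finset.Ico 1 b, n / p ^ (m + i) := by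
    intro n
    rw [← Finset.sum_Ico_consecutive _ (by omega : 1 ≤ 1 + m) (by omega : 1 + m ≤ B)]
    congr 1
    rw [Finset.sum_Ico_eq_sum_range, Finset.sum_Ico_eq_sum_range]
    have hcard : B - (1 + m) = b - 1 := by omega
    rw [hcard]
    refine Finset.sum_congr rfl fun i _ => ?_
    congr 2
    omega
  have hsmall : (∑ i ∈ Finset.Ico 1 (1 + m), k' / p ^ i)
      + (∑ i ∈ Finset.Ico 1 (1 + m), k'' / p ^ i)
      ≤ ∑ i ∈ Finset.Ico 1 (1 + m), (k' + k'') / p ^ i := by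
    rw [← Finset.sum_add_distrib]
    exact Finset.sum_le_sum fun i _ => Nat.add_div_le_add_div _ _ _
  have e1 := hq (k' + k'') le_rfl
  have e2 := hq k' hle
  have e3 := hq k'' (Nat.le_add_left _ _)
  have f1 := hfull (k' + k'') le_rfl
  have f2 := hfull k' hle
  have f3 := hfull k'' (Nat.le_add_left _ _)
  rw [hsplit] at f1 f2 f3
  omega
end

section
/- Fix a prime p, natural numbers m and N with N ≥ 1, and for j ∈ ℕ write q_j := ⌊j / p^m⌋. Let D^(m) be the ℤ_p-submodule of ℚ_p[X_1,…,X_N] spanned by the elements ξ^⟨k⟩ := (∏_{i=1}^N q_{k_i}!/k_i!) · X_1^{k_1}⋯X_N^{k_N} for k ∈ ℕ^N. Then D^(m) equals the ℤ_p-subalgebra of ℚ_p[X_1,…,X_N] generated by the finite set { X_j^{p^i}/(p^i)! : 1 ≤ j ≤ N, 0 ≤ i ≤ m }; in particular D^(m) is a Noetherian ring. -/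
/-!
By Legendre's formula, `v_p(n!) - v_p(⌊n/p^m⌋!) = ∑_{i=1}^m ⌊n/p^i⌋ =: L(n)`, so the coefficient
`⌊n/p^m⌋!/n!` of `ξ^⟨n e_j⟩` has norm `p^L(n)`. Since `L` is superadditive,
`ξ^⟨k⟩ ξ^⟨l⟩ ∈ ℤ_p ξ^⟨k+l⟩`, so the span of the `ξ^⟨k⟩` is a subalgebra; it contains the generators
`X_j^{p^i}/(p^i)! = ξ^⟨p^i e_j⟩`. Conversely `ξ^⟨k⟩ = ∏_j ξ^⟨k_j e_j⟩`, and writing `a = p^i + b` with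
`i = min(m, ⌊log_p a⌋)` there are no carries in the quotients `⌊a/p^j⌋`, `j ≤ m`, so
`L(a) = L(p^i) + L(b)` and `ξ^⟨a e_j⟩ ∈ ℤ_p ξ^⟨p^i e_j⟩ ξ^⟨b e_j⟩`; induction on `a` finishes.
Finite generation over the Noetherian ring `ℤ_p` gives Noetherianity.
-/

open scoped BigOperators

/-- The element `ξ^⟨k⟩ = (∏ q_{k_i}!/k_i!) · X^k` of `ℚ_p[X_1,…,X_N]`,
realizing the basis of the level-`m` distribution algebra `D^(m)(𝔾_a^N)`. -/
noncomputable def xiGa (p : ℕ) [Fact p.Prime] (m N : ℕ) (k : Fin N →₀ ℕ) :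
    MvPolynomial (Fin N) ℚ_[p] :=
  (∏ i : Fin N,
      ((Nat.factorial (k i / p ^ m) : ℚ_[p]) / (Nat.factorial (k i) : ℚ_[p]))) •
    MvPolynomial.monomial k (1 : ℚ_[p])

open Finset Nat

def legendreSum (p m n : ℕ) : ℕ := ∑ i ∈ Icc 1 m, n / p ^ i

section legendreSum

variable {p m : ℕ}

theorem legendreSum_add_legendreSum_le (a b : ℕ) :
    legendreSum p m a + legendreSum p m b ≤ legendreSum p m (a + b) := by
  rw [legendreSum, legendreSum, legendreSum, ← sum_add_distrib]
  exact sum_le_sum fun i _ => Nat.div_add_div_le_add_div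

theorem legendreSum_pow_add (hp : 0 < p) {i b : ℕ} (h : i < m → p ^ i + b < p ^ (i + 1)) :
    legendreSum p m (p ^ i + b) = legendreSum p m (p ^ i) + legendreSum p m b := by
  rw [legendreSum, legendreSum, legendreSum, ← sum_add_distrib]
  refine sum_congr rfl fun j hj => ?_
  rcases le_or_gt j i with hji | hij
  · obtain ⟨c, rfl⟩ := Nat.exists_eq_add_of_le hji
    rw [pow_add, Nat.mul_add_div (pow_pos hp j), Nat.mul_div_cancel_left _ (pow_pos hp j)]
  · have hlt : p ^ i + b < p ^ j :=
      (h (by grind)).trans_le (Nat.pow_le_pow_right hp hij)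
    rw [Nat.div_eq_of_lt hlt, Nat.div_eq_of_lt (by omega), Nat.div_eq_of_lt (by omega)]

variable [Fact p.Prime]

theorem padicValNat_factorial_eq_add_legendreSum (m n : ℕ) :
    padicValNat p n ! = padicValNat p (n / p ^ m)! + legendreSum p m n := by
  induction m with
  | zero => simp [legendreSum]
  | succ m ih =>
    rw [ih, legendreSum, legendreSum, sum_Icc_succ_top (by omega : 1 ≤ m + 1),
      ← padicValNat_mul_div_factorial (n / p ^ m), padicValNat_factorial_mul,
      Nat.div_div_eq_div_mul, ← pow_succ]
    ring

end legendreSum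

theorem PadicInt.exists_mul_eq_of_norm_le {p : ℕ} [Fact p.Prime] {x y : ℚ_[p]} (hy : y ≠ 0)
    (h : ‖x‖ ≤ ‖y‖) : ∃ z : ℤ_[p], x = z * y :=
  ⟨⟨x / y, by rwa [norm_div, div_le_one (norm_pos_iff.mpr hy)]⟩, (div_mul_cancel₀ x hy).symm⟩

theorem Padic.norm_natCast_eq_zpow {p : ℕ} [Fact p.Prime] {n : ℕ} (hn : n ≠ 0) :
    ‖(n : ℚ_[p])‖ = (p : ℝ) ^ (-(padicValNat p n : ℤ)) := by
  rw [Padic.norm_eq_zpow_neg_valuation (Nat.cast_ne_zero.mpr hn), Padic.valuation_natCast]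

noncomputable def xiCoeff (p : ℕ) [Fact p.Prime] (m n : ℕ) : ℚ_[p] :=
  ((n / p ^ m)! : ℚ_[p]) / (n ! : ℚ_[p])

section xiCoeff

variable {p : ℕ} [hp : Fact p.Prime] {m : ℕ}

theorem xiCoeff_ne_zero (n : ℕ) : xiCoeff p m n ≠ 0 :=
  div_ne_zero (Nat.cast_ne_zero.mpr (factorial_ne_zero _))
    (Nat.cast_ne_zero.mpr (factorial_ne_zero _))

theorem norm_xiCoeff (n : ℕ) : ‖xiCoeff p m n‖ = (p : ℝ) ^ legendreSum p m n := by
  rw [xiCoeff, norm_div, Padic.norm_natCast_eq_zpow (factorial_ne_zero _),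
    Padic.norm_natCast_eq_zpow (factorial_ne_zero _),
    ← zpow_sub₀ (by exact_mod_cast hp.out.ne_zero), padicValNat_factorial_eq_add_legendreSum m n,
    ← zpow_natCast]
  push_cast
  ring_nf

theorem xiCoeff_zero : xiCoeff p m 0 = 1 := by simp [xiCoeff]

theorem xiCoeff_pow {i : ℕ} (hi : i ≤ m) : xiCoeff p m (p ^ i) = ((p ^ i)! : ℚ_[p])⁻¹ := by
  have hq : (p ^ i / p ^ m)! = 1 := by
    rcases hi.lt_or_eq with hlt | rfl
    · rw [Nat.div_eq_of_lt (Nat.pow_lt_pow_right hp.out.one_lt hlt), factorial_zero]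
    · rw [Nat.div_self (pow_pos hp.out.pos _), factorial_one]
  rw [xiCoeff, hq, Nat.cast_one, one_div]

theorem exists_xiCoeff_mul_xiCoeff_eq (a b : ℕ) :
    ∃ z : ℤ_[p], xiCoeff p m a * xiCoeff p m b = z * xiCoeff p m (a + b) := by
  refine PadicInt.exists_mul_eq_of_norm_le (xiCoeff_ne_zero _) ?_
  rw [norm_mul, norm_xiCoeff, norm_xiCoeff, norm_xiCoeff, ← pow_add]
  exact pow_le_pow_right₀ (by exact_mod_cast hp.out.one_le) (legendreSum_add_legendreSum_le a b)

theorem exists_xiCoeff_pow_add_eq {i b : ℕ} (h : i < m → p ^ i + b < p ^ (i + 1)) :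
    ∃ z : ℤ_[p], xiCoeff p m (p ^ i + b) = z * (xiCoeff p m (p ^ i) * xiCoeff p m b) := by
  refine PadicInt.exists_mul_eq_of_norm_le
    (mul_ne_zero (xiCoeff_ne_zero _) (xiCoeff_ne_zero _)) ?_
  rw [norm_mul, norm_xiCoeff, norm_xiCoeff, norm_xiCoeff, ← pow_add,
    legendreSum_pow_add hp.out.pos h]

end xiCoeff

def xiGenerators (p : ℕ) [Fact p.Prime] (m N : ℕ) : Set (MvPolynomial (Fin N) ℚ_[p]) :=
  { f | ∃ j : Fin N, ∃ i : ℕ, i ≤ m ∧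
      f = ((Nat.factorial (p ^ i) : ℚ_[p]))⁻¹ •
        (MvPolynomial.X j : MvPolynomial (Fin N) ℚ_[p]) ^ (p ^ i) }

section xiGa

open MvPolynomial

variable {p : ℕ} [Fact p.Prime] {m N : ℕ}

theorem xiGa_eq_monomial (k : Fin N →₀ ℕ) :
    xiGa p m N k = monomial k (∏ i, xiCoeff p m (k i)) := by
  rw [xiGa, smul_monomial, smul_eq_mul, mul_one]
  rfl

theorem padicInt_smul_monomial (z : ℤ_[p]) (k : Fin N →₀ ℕ) (c : ℚ_[p]) :
    z • monomial k c = monomial k (z * c) := by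
  rw [smul_monomial, Algebra.smul_def, PadicInt.algebraMap_apply]

theorem xiGa_zero : xiGa p m N 0 = 1 := by
  simp [xiGa_eq_monomial, xiCoeff_zero]

theorem xiGa_single (j : Fin N) (a : ℕ) :
    xiGa p m N (Finsupp.single j a) = monomial (Finsupp.single j a) (xiCoeff p m a) := by
  rw [xiGa_eq_monomial, Fintype.prod_eq_single j fun i hi => by
    rw [Finsupp.single_eq_of_ne hi, xiCoeff_zero], Finsupp.single_eq_same]

theorem xiGa_eq_prod_single (k : Fin N →₀ ℕ) :
    xiGa p m N k = ∏ i, xiGa p m N (Finsupp.single i (k i)) := by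
  simp only [xiGa_single]
  rw [← monomial_sum_prod, Finsupp.univ_sum_single, xiGa_eq_monomial]

theorem xiGa_single_pow {i : ℕ} (hi : i ≤ m) (j : Fin N) :
    xiGa p m N (Finsupp.single j (p ^ i)) =
      ((p ^ i)! : ℚ_[p])⁻¹ • (X j : MvPolynomial (Fin N) ℚ_[p]) ^ (p ^ i) := by
  rw [xiGa_single, xiCoeff_pow hi, X_pow_eq_monomial, smul_monomial, smul_eq_mul, mul_one]

theorem exists_xiGa_mul_xiGa_eq_smul (k l : Fin N →₀ ℕ) :
    ∃ z : ℤ_[p], xiGa p m N k * xiGa p m N l = z • xiGa p m N (k + l) := by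
  choose z hz using fun i => exists_xiCoeff_mul_xiCoeff_eq (p := p) (m := m) (k i) (l i)
  refine ⟨∏ i, z i, ?_⟩
  simp only [xiGa_eq_monomial, monomial_mul, padicInt_smul_monomial, ← prod_mul_distrib, hz,
    Finsupp.add_apply]
  rw [prod_mul_distrib]
  congr 2
  exact (map_prod PadicInt.Coe.ringHom z univ).symm

theorem exists_xiGa_single_pow_add_eq_smul {i b : ℕ} (h : i < m → p ^ i + b < p ^ (i + 1))
    (j : Fin N) : ∃ z : ℤ_[p], xiGa p m N (Finsupp.single j (p ^ i + b)) =
      z • (xiGa p m N (Finsupp.single j (p ^ i)) * xiGa p m N (Finsupp.single j b)) := by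
  obtain ⟨z, hz⟩ := exists_xiCoeff_pow_add_eq (p := p) h
  refine ⟨z, ?_⟩
  rw [xiGa_single, xiGa_single, xiGa_single, monomial_mul, padicInt_smul_monomial,
    Finsupp.single_add, hz]

end xiGa

theorem Nat.exists_eq_pow_add_of_pos {p : ℕ} (hp : 1 < p) (m : ℕ) {a : ℕ} (ha : 0 < a) :
    ∃ i b, i ≤ m ∧ a = p ^ i + b ∧ (i < m → a < p ^ (i + 1)) := by
  rcases le_or_gt (p ^ m) a with hle | hlt
  · exact ⟨m, a - p ^ m, le_rfl, by omega, fun h => absurd h (lt_irrefl m)⟩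
  · refine ⟨Nat.log p a, a - p ^ Nat.log p a, (Nat.log_lt_of_lt_pow ha.ne' hlt).le,
      ?_, fun _ => Nat.lt_pow_succ_log_self hp a⟩
    have := Nat.pow_log_le_self p ha.ne'
    omega

section xiSubalgebra

variable (p : ℕ) [hp : Fact p.Prime] (m N : ℕ)

theorem one_mem_span_xiGa :
    (1 : MvPolynomial (Fin N) ℚ_[p]) ∈ Submodule.span ℤ_[p] (Set.range (xiGa p m N)) :=
  xiGa_zero (p := p) (m := m) ▸ Submodule.subset_span ⟨0, rfl⟩

theorem span_xiGa_mul_le :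
    Submodule.span ℤ_[p] (Set.range (xiGa p m N)) * Submodule.span ℤ_[p] (Set.range (xiGa p m N))
      ≤ Submodule.span ℤ_[p] (Set.range (xiGa p m N)) := by
  rw [Submodule.span_mul_span, Submodule.span_le]
  rintro _ ⟨_, ⟨k, rfl⟩, _, ⟨l, rfl⟩, rfl⟩
  obtain ⟨z, hz⟩ := exists_xiGa_mul_xiGa_eq_smul (p := p) (m := m) k l
  change xiGa p m N k * xiGa p m N l ∈ _
  rw [hz]
  exact Submodule.smul_mem _ z (Submodule.subset_span ⟨k + l, rfl⟩)

noncomputable def xiSubalgebra : Subalgebra ℤ_[p] (MvPolynomial (Fin N) ℚ_[p]) :=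
  (Submodule.span ℤ_[p] (Set.range (xiGa p m N))).toSubalgebra (one_mem_span_xiGa p m N)
    fun _ _ hx hy => span_xiGa_mul_le p m N (Submodule.mul_mem_mul hx hy)

theorem xiGa_single_mem_adjoin (j : Fin N) (a : ℕ) :
    xiGa p m N (Finsupp.single j a) ∈ Algebra.adjoin ℤ_[p] (xiGenerators p m N) := by
  induction a using Nat.strong_induction_on with
  | _ a ih =>
  rcases a.eq_zero_or_pos with rfl | ha
  · rw [Finsupp.single_zero, xiGa_zero]
    exact one_mem _
  obtain ⟨i, b, hi, rfl, h⟩ := Nat.exists_eq_pow_add_of_pos hp.out.one_lt m ha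
  obtain ⟨z, hz⟩ := exists_xiGa_single_pow_add_eq_smul h j
  have hb : b < p ^ i + b := Nat.lt_add_of_pos_left (pow_pos hp.out.pos i)
  rw [hz]
  exact Subalgebra.smul_mem _
    (mul_mem (Algebra.subset_adjoin (s := xiGenerators p m N) ⟨j, i, hi, xiGa_single_pow hi j⟩)
      (ih b hb)) z

theorem adjoin_xiGenerators :
    Algebra.adjoin ℤ_[p] (xiGenerators p m N) = xiSubalgebra p m N := by
  refine le_antisymm (Algebra.adjoin_le ?_) ?_
  · rintro _ ⟨j, i, hi, rfl⟩
    rw [← xiGa_single_pow hi]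
    exact Submodule.subset_span ⟨_, rfl⟩
  · rw [← Subalgebra.toSubmodule.le_iff_le, xiSubalgebra, Submodule.toSubalgebra_toSubmodule,
      Submodule.span_le]
    rintro _ ⟨k, rfl⟩
    rw [xiGa_eq_prod_single]
    exact Subalgebra.prod_mem _ fun i _ => xiGa_single_mem_adjoin p m N i (k i)

theorem xiGenerators_finite : (xiGenerators p m N).Finite := by
  refine (Set.finite_range fun x : Fin N × Fin (m + 1) =>
    xiGa p m N (Finsupp.single x.1 (p ^ (x.2 : ℕ)))).subset ?_
  rintro _ ⟨j, i, hi, rfl⟩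
  exact ⟨(j, ⟨i, Nat.lt_succ_of_le hi⟩), xiGa_single_pow hi j⟩

end xiSubalgebra

theorem stmt_3_general (p : ℕ) [Fact p.Prime] (m N : ℕ) :
    Subalgebra.toSubmodule
        (Algebra.adjoin ℤ_[p]
          { f : MvPolynomial (Fin N) ℚ_[p] |
            ∃ j : Fin N, ∃ i : ℕ, i ≤ m ∧
              f = ((Nat.factorial (p ^ i) : ℚ_[p]))⁻¹ •
                    (MvPolynomial.X j : MvPolynomial (Fin N) ℚ_[p]) ^ (p ^ i) }) =
      Submodule.span ℤ_[p] (Set.range (xiGa p m N)) ∧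
    IsNoetherianRing
      (Algebra.adjoin ℤ_[p]
        { f : MvPolynomial (Fin N) ℚ_[p] |
          ∃ j : Fin N, ∃ i : ℕ, i ≤ m ∧
            f = ((Nat.factorial (p ^ i) : ℚ_[p]))⁻¹ •
                  (MvPolynomial.X j : MvPolynomial (Fin N) ℚ_[p]) ^ (p ^ i) }) :=
  ⟨congrArg Subalgebra.toSubmodule (adjoin_xiGenerators p m N),
    isNoetherianRing_of_fg (Subalgebra.fg_def.mpr ⟨_, xiGenerators_finite p m N, rfl⟩)⟩

/-- `D^(m)(𝔾_a^N)`, realized as the `ℤ_p`-span of the `ξ^⟨k⟩` inside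
`ℚ_p[X_1,…,X_N]`, is the `ℤ_p`-subalgebra generated by the finitely many
elements `X_j^{p^i}/(p^i)!` with `i ≤ m`; in particular it is Noetherian. -/
theorem stmt_3 (p : ℕ) [Fact p.Prime] (m N : ℕ) (hN : 1 ≤ N) :
    Subalgebra.toSubmodule
        (Algebra.adjoin ℤ_[p]
          { f : MvPolynomial (Fin N) ℚ_[p] |
            ∃ j : Fin N, ∃ i : ℕ, i ≤ m ∧
              f = ((Nat.factorial (p ^ i) : ℚ_[p]))⁻¹ •
                    (MvPolynomial.X j : MvPolynomial (Fin N) ℚ_[p]) ^ (p ^ i) }) =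
      Submodule.span ℤ_[p] (Set.range (xiGa p m N)) ∧
    IsNoetherianRing
      (Algebra.adjoin ℤ_[p]
        { f : MvPolynomial (Fin N) ℚ_[p] |
          ∃ j : Fin N, ∃ i : ℕ, i ≤ m ∧
            f = ((Nat.factorial (p ^ i) : ℚ_[p]))⁻¹ •
                  (MvPolynomial.X j : MvPolynomial (Fin N) ℚ_[p]) ^ (p ^ i) }) :=
  stmt_3_general p m N
end

section
/- Fix a prime p and a natural number m, and for j ∈ ℕ write q_j := ⌊j / p^m⌋. In ℚ_p[X] set binom(X,k) := X(X−1)⋯(X−k+1)/k! and ξ^⟨k⟩ := q_k! · binom(X,k). Then for all natural numbers k', k'': ξ^⟨k'⟩ · ξ^⟨k''⟩ = Σ_{l = max(k',k'')}^{k'+k''} ( q_{k'}! · q_{k''}! · l! / ( q_l! · (k'+k''−l)! · (l−k')! · (l−k'')! ) ) · ξ^⟨l⟩, an identity in ℚ_p[X]. -/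
/-!
Write `ξ^⟨k⟩ = q_k! • binom(X, k)`; after pulling out the factorials `q_k!` it is enough to
expand `binom(X, a) * binom(X, b)` in the basis `binom(X, l)`, where the coefficient of
`binom(X, l)` is the multinomial `l! / ((a + b - l)! (l - a)! (l - b)!) = C(l, a) C(a, l - b)`.
Since `ℚ_p` is infinite, a polynomial identity can be checked at the points `X = n ∈ ℕ`, where it
says `C(n, a) C(n, b) = ∑ₗ C(n, l) C(l, a) C(a, l - b)`: pairs of an `a`-subset and a `b`-subset
of an `n`-set, sorted by the size `l` of their union. Algebraically, `C(n, l) C(l, a) =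
C(n, a) C(n - a, l - a)`, and the remaining sum is Vandermonde's identity for `C(n, b)`.
-/

open scoped BigOperators

/-- The element `ξ^⟨k⟩ = q_k!·binom(X,k) = (q_k!/k!)·X(X−1)⋯(X−k+1)` of `ℚ_p[X]`,
realizing the basis of the level-`m` distribution algebra `D^(m)(𝔾_m)`. -/
noncomputable def xiGm (p : ℕ) [Fact p.Prime] (m k : ℕ) : Polynomial ℚ_[p] :=
  ((Nat.factorial (k / p ^ m) : ℚ_[p]) / (Nat.factorial k : ℚ_[p])) •
    descPochhammer ℚ_[p] k

open Finset Polynomial Nat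

theorem Nat.sum_Icc_choose_sub_mul_choose_sub (m a b : ℕ) :
    ∑ l ∈ Icc (max a b) (a + b), m.choose (l - a) * a.choose (l - b) = (m + a).choose b := by
  calc ∑ l ∈ Icc (max a b) (a + b), m.choose (l - a) * a.choose (l - b)
      = ∑ l ∈ Icc a (a + b), m.choose (l - a) * a.choose (b - (l - a)) := by
        refine sum_subset_zero_on_sdiff (Icc_subset_Icc_left (le_max_left a b)) ?_ ?_
        · intro l hl
          simp only [mem_sdiff, mem_Icc] at hl
          rw [Nat.choose_eq_zero_of_lt (show a < b - (l - a) by omega), mul_zero]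
        · intro l hl
          simp only [mem_Icc] at hl
          rw [Nat.choose_symm_of_eq_add (show a = (l - b) + (b - (l - a)) by omega)]
    _ = ∑ k ∈ range (b + 1), m.choose k * a.choose (b - k) :=
        sum_nbij' (· - a) (· + a) (by intro l; simp; omega) (by intro k; simp; omega)
          (by intro l; simp; omega) (by intro k; simp) (fun _ _ => rfl)
    _ = (m + a).choose b := by
        rw [add_choose_eq,
          Finset.Nat.sum_antidiagonal_eq_sum_range_succ (fun i j => m.choose i * a.choose j)]

theorem Nat.choose_mul_choose_eq_sum (n a b : ℕ) :
    n.choose a * n.choose b =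
      ∑ l ∈ Icc (max a b) (a + b), n.choose l * (l.choose a * a.choose (l - b)) := by
  have hsplit : n.choose a * n.choose b = n.choose a * (n - a + a).choose b := by
    rcases le_or_gt a n with ha | ha
    · rw [Nat.sub_add_cancel ha]
    · rw [Nat.choose_eq_zero_of_lt ha, zero_mul, zero_mul]
  rw [hsplit, ← Nat.sum_Icc_choose_sub_mul_choose_sub, mul_sum]
  refine sum_congr rfl fun l hl => ?_
  rw [← mul_assoc (n.choose l), Nat.choose_mul (by simp at hl; omega), mul_assoc]

section BinomialPolynomial

variable (K : Type*) [Field K] [CharZero K]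

noncomputable def binomialPoly (k : ℕ) : K[X] := ((k ! : K)⁻¹) • descPochhammer K k

variable {K}

theorem binomialPoly_eval_natCast (k n : ℕ) : (binomialPoly K k).eval (n : K) = n.choose k := by
  rw [binomialPoly, eval_smul, descPochhammer_eval_eq_descFactorial,
    Nat.descFactorial_eq_factorial_mul_choose, smul_eq_mul, Nat.cast_mul,
    inv_mul_cancel_left₀ (by exact_mod_cast k.factorial_ne_zero)]

theorem binomialPoly_mul_binomialPoly (a b : ℕ) :
    binomialPoly K a * binomialPoly K b =
      ∑ l ∈ Icc (max a b) (a + b), ((l.choose a * a.choose (l - b) : ℕ) : K) • binomialPoly K l := by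
  refine eq_of_infinite_eval_eq _ _
    ((Set.infinite_range_of_injective Nat.cast_injective).mono ?_)
  rintro _ ⟨n, rfl⟩
  simp only [Set.mem_ofPred_eq, eval_mul, eval_finsetSum, eval_smul, smul_eq_mul,
    binomialPoly_eval_natCast]
  exact_mod_cast (Nat.choose_mul_choose_eq_sum n a b).trans (sum_congr rfl fun _ _ => mul_comm _ _)

end BinomialPolynomial

theorem Nat.choose_mul_choose_mul_factorial {a b l : ℕ} (hal : a ≤ l) (hbl : b ≤ l)
    (hlab : l ≤ a + b) :
    l.choose a * a.choose (l - b) * ((a + b - l)! * (l - a)! * (l - b)!) = l ! := by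
  rw [← Nat.choose_mul_factorial_mul_factorial hal,
    ← Nat.choose_mul_factorial_mul_factorial (show l - b ≤ a by omega),
    show a - (l - b) = a + b - l by omega]
  ring

theorem xiGm_eq_smul_binomialPoly (p : ℕ) [Fact p.Prime] (m k : ℕ) :
    xiGm p m k = ((k / p ^ m)! : ℚ_[p]) • binomialPoly ℚ_[p] k := by
  rw [xiGm, binomialPoly, smul_smul, div_eq_mul_inv]

/-- The multiplication formula in `D^(m)(𝔾_m)`:
`ξ^⟨k'⟩·ξ^⟨k''⟩ = Σ_{l=max(k',k'')}^{k'+k''}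
  (q_{k'}!·q_{k''}!·l!/(q_l!·(k'+k''−l)!·(l−k')!·(l−k'')!))·ξ^⟨l⟩`. -/
theorem stmt_4 (p : ℕ) [Fact p.Prime] (m : ℕ) :
    ∀ k' k'' : ℕ,
      xiGm p m k' * xiGm p m k'' =
        ∑ l ∈ Finset.Icc (max k' k'') (k' + k''),
          (((Nat.factorial (k' / p ^ m) : ℚ_[p]) *
                (Nat.factorial (k'' / p ^ m) : ℚ_[p]) *
                (Nat.factorial l : ℚ_[p])) /
              ((Nat.factorial (l / p ^ m) : ℚ_[p]) *
                (Nat.factorial (k' + k'' - l) : ℚ_[p]) *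
                (Nat.factorial (l - k') : ℚ_[p]) *
                (Nat.factorial (l - k'') : ℚ_[p]))) •
            xiGm p m l := by
  intro a b
  simp only [xiGm_eq_smul_binomialPoly]
  rw [smul_mul_smul_comm, binomialPoly_mul_binomialPoly, smul_sum]
  refine sum_congr rfl fun l hl => ?_
  obtain ⟨⟨hal, hbl⟩, hlab⟩ : (a ≤ l ∧ b ≤ l) ∧ l ≤ a + b := by simpa using hl
  rw [smul_smul, smul_smul, ← Nat.choose_mul_choose_mul_factorial hal hbl hlab]
  have hfac (k : ℕ) : (k ! : ℚ_[p]) ≠ 0 := by exact_mod_cast k.factorial_ne_zero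
  congr 1
  push_cast
  field_simp [hfac]
end

section
/- Let p be a prime number and m a natural number, and for j ∈ ℕ write q_j := ⌊j / p^m⌋. Then for all natural numbers k', k'', l with max(k',k'') ≤ l ≤ k'+k'': padicValNat p (q_l!) + padicValNat p ((k'+k''−l)!) + padicValNat p ((l−k')!) + padicValNat p ((l−k'')!) ≤ padicValNat p (l!) + padicValNat p (q_{k'}!) + padicValNat p (q_{k''}!). (Equivalently, the coefficient q_{k'}!·q_{k''}!·l!/(q_l!·(k'+k''−l)!·(l−k')!·(l−k'')!) appearing in the multiplication formula of D^(m)(𝔾_m) is a p-adic integer.) -/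
/-!
Write `a = k' + k'' - l`, `b = l - k'`, `c = l - k''`, so that `k' = a + c`, `k'' = a + b` and
`l = a + b + c`. Splitting Legendre's formula at `p ^ m` gives
`v_p(n!) = v_p(⌊n / p^m⌋!) + ∑_{1 ≤ i ≤ m} ⌊n / p^i⌋`. The second part is superadditive in `n`,
which settles the terms `≤ m` against `l!`; the first part is handled by
`⌊a / p^m⌋! ⌊c / p^m⌋! ∣ ⌊(a + c) / p^m⌋!` and `⌊b / p^m⌋ ≤ ⌊(a + b) / p^m⌋`.
-/

open Nat Finset

section

variable {p : ℕ}

theorem padicValNat_le_of_dvd [Fact p.Prime] {a b : ℕ} (hb : b ≠ 0) (h : a ∣ b) :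
    padicValNat p a ≤ padicValNat p b :=
  (padicValNat_dvd_iff_le hb).1 (pow_padicValNat_dvd.trans h)

theorem padicValNat_factorial_mono [Fact p.Prime] {x y : ℕ} (h : x ≤ y) :
    padicValNat p x ! ≤ padicValNat p y ! :=
  padicValNat_le_of_dvd (factorial_ne_zero y) (factorial_dvd_factorial h)

theorem padicValNat_factorial_add_factorial_le [Fact p.Prime] (x y : ℕ) :
    padicValNat p x ! + padicValNat p y ! ≤ padicValNat p (x + y)! := by
  rw [← padicValNat.mul (factorial_ne_zero x) (factorial_ne_zero y)]
  exact padicValNat_le_of_dvd (factorial_ne_zero _) (factorial_mul_factorial_dvd_factorial_add x y)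

theorem padicValNat_factorial_div_add_factorial_div_le [Fact p.Prime] (x y d : ℕ) :
    padicValNat p (x / d)! + padicValNat p (y / d)! ≤ padicValNat p ((x + y) / d)! :=
  (padicValNat_factorial_add_factorial_le _ _).trans
    (padicValNat_factorial_mono Nat.div_add_div_le_add_div)

theorem sum_div_add_sum_div_le {ι : Type*} (s : Finset ι) (d : ι → ℕ) (x y : ℕ) :
    ∑ i ∈ s, x / d i + ∑ i ∈ s, y / d i ≤ ∑ i ∈ s, (x + y) / d i := by
  rw [← sum_add_distrib]
  exact sum_le_sum fun i _ => Nat.div_add_div_le_add_div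

theorem padicValNat_factorial_eq_div_pow_add [Fact p.Prime] (m n : ℕ) :
    padicValNat p n ! = padicValNat p (n / p ^ m)! + ∑ i ∈ Ico 1 (m + 1), n / p ^ i := by
  set b := log p n + 1
  have hb : log p (n / p ^ m) < b := lt_succ_of_le (log_mono_right (div_le_self n _))
  rw [padicValNat_factorial (show log p n < m + b by omega), padicValNat_factorial hb,
    ← sum_Ico_consecutive _ (show 1 ≤ m + 1 by omega) (show m + 1 ≤ m + b by omega), add_comm]
  congr 1
  rw [show m + 1 = 1 + m by omega, add_comm m b, ← sum_Ico_add']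
  refine sum_congr rfl fun i _ => ?_
  rw [Nat.div_div_eq_div_mul, ← pow_add, add_comm m i]

theorem padicValNat_factorial_div_pow_add_le [Fact p.Prime] (m a b c : ℕ) :
    padicValNat p ((a + b + c) / p ^ m)! + padicValNat p a ! + padicValNat p b ! +
        padicValNat p c ! ≤
      padicValNat p (a + b + c)! + padicValNat p ((a + c) / p ^ m)! +
        padicValNat p ((a + b) / p ^ m)! := by
  rw [padicValNat_factorial_eq_div_pow_add m (a + b + c), padicValNat_factorial_eq_div_pow_add m a,
    padicValNat_factorial_eq_div_pow_add m b, padicValNat_factorial_eq_div_pow_add m c]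
  have hab := sum_div_add_sum_div_le (Ico 1 (m + 1)) (p ^ ·) a b
  have habc := sum_div_add_sum_div_le (Ico 1 (m + 1)) (p ^ ·) (a + b) c
  have hac := padicValNat_factorial_div_add_factorial_div_le (p := p) a c (p ^ m)
  have hqb : padicValNat p (b / p ^ m)! ≤ padicValNat p ((a + b) / p ^ m)! :=
    padicValNat_factorial_mono (Nat.div_le_div_right le_add_self)
  omega

end

/-- The structure constants of the level-`m` distribution algebra `D^(m)(𝔾_m)`
are `p`-adic integers: with `q j = j / p^m`, for `max k' k'' ≤ l ≤ k' + k''`,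
the coefficient `q_{k'}!·q_{k''}!·l!/(q_l!·(k'+k''−l)!·(l−k')!·(l−k'')!)` has
nonnegative `p`-adic valuation. -/
theorem stmt_5 (p : ℕ) (hp : p.Prime) (m k' k'' l : ℕ)
    (h1 : max k' k'' ≤ l) (h2 : l ≤ k' + k'') :
    padicValNat p (Nat.factorial (l / p ^ m)) +
        padicValNat p (Nat.factorial (k' + k'' - l)) +
        padicValNat p (Nat.factorial (l - k')) +
        padicValNat p (Nat.factorial (l - k'')) ≤
      padicValNat p (Nat.factorial l) +
        padicValNat p (Nat.factorial (k' / p ^ m)) +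
        padicValNat p (Nat.factorial (k'' / p ^ m)) := by
  have := Fact.mk hp
  obtain ⟨a, b, c, rfl, rfl, rfl⟩ : ∃ a b c, k' = a + c ∧ k'' = a + b ∧ l = a + b + c :=
    ⟨k' + k'' - l, l - k', l - k'', by omega, by omega, by omega⟩
  rw [show a + c + (a + b) - (a + b + c) = a by omega, show a + b + c - (a + c) = b by omega,
    show a + b + c - (a + b) = c by omega]
  exact padicValNat_factorial_div_pow_add_le m a b c
end

section
/- Let p be a prime, N ≥ 1 a natural number, and for m, j ∈ ℕ write q_j^{(m)} := ⌊j / p^m⌋. For a multi-index k ∈ ℕ^N write |k| := k_1 + ⋯ + k_N, and for x ∈ ℤ_p let v_p(x) denote the p-adic valuation (with v_p(0) = ∞). Let (a_k)_{k ∈ ℕ^N} be a family of elements of ℤ_p such that v_p(a_k) → ∞ as |k| → ∞. Then the following are equivalent: (i) there exists m ∈ ℕ such that for every k the element ∏_{i=1}^N q^{(m)}_{k_i}! divides a_k in ℤ_p and v_p(a_k) − v_p(∏_{i=1}^N q^{(m)}_{k_i}!) → ∞ as |k| → ∞; (ii) there exist real constants α > 0 and β such that for every i ∈ ℕ and every k,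 if p^{i+1} does not divide a_k then |k| ≤ α·i + β; (iii) there exist real constants η > 0 and c such that v_p(a_k) ≥ η·|k| + c for every k. -/
/-!
Everything is read off `p`-adic valuations. Since `⌊q/p⌋ ≤ v_p(q!) ≤ q`, the divisor
`Dₖ = ∏ᵢ (⌊kᵢ/p^m⌋)!` has valuation at least `|k|/p^(m+1) - N`, which gives (i) ⇒ (iii).
Conversely, for `p^m` large compared with `1/η` and `|c|/η`, `v_p(Dₖ) ≤ |k|/p^m ≤ η|k|/2`; as
`Dₖ = 1` unless `|k| ≥ p^m`, also `v_p(Dₖ) ≤ max 0 (η|k| + c) ≤ v_p(aₖ)`. Thus `Dₖ ∣ aₖ` with a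
quotient of valuation at least `η|k|/2 + c`, which is (i). Conditions (ii) and (iii) are one linear
inequality between `|k|` and `v_p(aₖ)` solved for different variables, because `v_p(x) ≥ t`
exactly when `t ≤ i` for every `i` with `p^(i+1) ∤ x`.
-/

open scoped Nat

namespace PadicInt

variable {p : ℕ} [hp : Fact p.Prime]

theorem norm_eq_rpow_neg_valuation {x : ℤ_[p]} (hx : x ≠ 0) :
    ‖x‖ = (p : ℝ) ^ (-(x.valuation : ℝ)) := by
  rw [norm_eq_zpow_neg_valuation hx, ← Real.rpow_intCast]
  push_cast
  rfl

theorem pow_dvd_iff_le_valuation {x : ℤ_[p]} (hx : x ≠ 0) (n : ℕ) :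
    (p : ℤ_[p]) ^ n ∣ x ↔ n ≤ x.valuation := by
  rw [← Ideal.mem_span_singleton, mem_span_pow_iff_le_valuation x hx]

theorem valuation_natCast (n : ℕ) : (n : ℤ_[p]).valuation = padicValNat p n := by
  have := Padic.valuation_natCast (p := p) n
  rw [← coe_natCast, valuation_coe] at this
  exact_mod_cast this

theorem norm_le_rpow_neg_iff (x : ℤ_[p]) (t : ℝ) :
    ‖x‖ ≤ (p : ℝ) ^ (-t) ↔ ∀ i : ℕ, ¬ (p : ℤ_[p]) ^ (i + 1) ∣ x → t ≤ i := by
  rcases eq_or_ne x 0 with rfl | hx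
  · simpa using (Real.rpow_pos_of_pos (by exact_mod_cast hp.out.pos) _).le
  have hp1 : (1 : ℝ) < p := by exact_mod_cast hp.out.one_lt
  simp only [norm_eq_rpow_neg_valuation hx, Real.rpow_le_rpow_left_iff hp1, neg_le_neg_iff,
    pow_dvd_iff_le_valuation hx, not_le, Nat.lt_succ_iff]
  exact ⟨fun h i hi => h.trans (by exact_mod_cast hi), fun h => h _ le_rfl⟩

theorem dvd_of_norm_le {x y : ℤ_[p]} (hy : y ≠ 0) (h : ‖x‖ ≤ ‖y‖) : y ∣ x := by
  rw [unitCoeff_spec hy, Units.mul_left_dvd, ← Ideal.mem_span_singleton,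
    ← norm_le_pow_iff_mem_span_pow]
  rwa [norm_eq_zpow_neg_valuation hy] at h

theorem exists_eq_mul_norm_le {x y : ℤ_[p]} {r : ℝ} (hy : y ≠ 0) (hxy : ‖x‖ ≤ ‖y‖)
    (hr : ‖x‖ ≤ ‖y‖ * r) : ∃ b, x = y * b ∧ ‖b‖ ≤ r := by
  obtain ⟨b, rfl⟩ := dvd_of_norm_le hy hxy
  rw [norm_mul] at hr
  exact ⟨b, rfl, le_of_mul_le_mul_left hr (norm_pos_iff.2 hy)⟩

theorem norm_natCast_eq_rpow {n : ℕ} (hn : n ≠ 0) :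
    ‖(n : ℤ_[p])‖ = (p : ℝ) ^ (-(padicValNat p n : ℝ)) := by
  rw [norm_eq_rpow_neg_valuation (Nat.cast_ne_zero.2 hn), valuation_natCast]

theorem norm_factorial_le (q : ℕ) : ‖(q ! : ℤ_[p])‖ ≤ (p : ℝ) ^ (-((q / p : ℕ) : ℝ)) := by
  have hp1 : (1 : ℝ) < p := by exact_mod_cast hp.out.one_lt
  have hle : q / p ≤ padicValNat p q ! :=
    calc q / p ≤ padicValNat p (p * (q / p))! := by
          rw [padicValNat_factorial_mul]; exact Nat.le_add_left _ _
      _ ≤ padicValNat p q ! := by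
          rw [← padicValNat_dvd_iff_le (Nat.factorial_ne_zero _)]
          exact pow_padicValNat_dvd.trans (Nat.factorial_dvd_factorial (Nat.mul_div_le q p))
  rw [norm_natCast_eq_rpow (Nat.factorial_ne_zero q), Real.rpow_le_rpow_left_iff hp1,
    neg_le_neg_iff]
  exact_mod_cast hle

theorem rpow_neg_le_norm_factorial (q : ℕ) : (p : ℝ) ^ (-(q : ℝ)) ≤ ‖(q ! : ℤ_[p])‖ := by
  have hp1 : (1 : ℝ) < p := by exact_mod_cast hp.out.one_lt
  rw [norm_natCast_eq_rpow (Nat.factorial_ne_zero q), Real.rpow_le_rpow_left_iff hp1,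
    neg_le_neg_iff]
  exact_mod_cast padicValNat_factorial_le p q

variable {ι : Type*} [Fintype ι]

theorem rpow_neg_sum_eq_prod (q : ι → ℕ) :
    (p : ℝ) ^ (-((∑ i, q i : ℕ) : ℝ)) = ∏ i, (p : ℝ) ^ (-(q i : ℝ)) := by
  rw [← Real.rpow_sum_of_pos (by exact_mod_cast hp.out.pos)]
  push_cast
  rw [Finset.sum_neg_distrib]

theorem norm_prod_factorial_le (q : ι → ℕ) :
    ‖∏ i, ((q i)! : ℤ_[p])‖ ≤ (p : ℝ) ^ (-((∑ i, q i / p : ℕ) : ℝ)) := by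
  rw [norm_prod, rpow_neg_sum_eq_prod]
  exact Finset.prod_le_prod (fun _ _ => norm_nonneg _) fun i _ => norm_factorial_le (q i)

theorem rpow_neg_sum_le_norm_prod_factorial (q : ι → ℕ) :
    (p : ℝ) ^ (-((∑ i, q i : ℕ) : ℝ)) ≤ ‖∏ i, ((q i)! : ℤ_[p])‖ := by
  rw [norm_prod, rpow_neg_sum_eq_prod]
  exact Finset.prod_le_prod (fun _ _ => by positivity) fun i _ =>
    rpow_neg_le_norm_factorial (q i)

end PadicInt

section

variable {ι : Type*} [Fintype ι]

theorem Nat.cast_sum_div_le (k : ι → ℕ) (n : ℕ) :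
    ((∑ i, k i / n : ℕ) : ℝ) ≤ ((∑ i, k i : ℕ) : ℝ) / n := by
  push_cast
  rw [Finset.sum_div]
  exact Finset.sum_le_sum fun i _ => Nat.cast_div_le

theorem Nat.cast_sum_div_sub_card_le (k : ι → ℕ) (n : ℕ) :
    ((∑ i, k i : ℕ) : ℝ) / n - Fintype.card ι ≤ ((∑ i, k i / n : ℕ) : ℝ) := by
  have h i : (k i : ℝ) / n - 1 ≤ ((k i / n : ℕ) : ℝ) := by
    rw [← Nat.floor_div_eq_div (K := ℝ), sub_le_iff_le_add]
    exact (Nat.lt_floor_add_one _).le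
  have hsum := Finset.sum_le_sum fun i (_ : i ∈ Finset.univ) => h i
  rw [Finset.sum_sub_distrib, ← Finset.sum_div, Finset.sum_const, Finset.card_univ] at hsum
  push_cast
  simpa using hsum

end

section Conditions

open PadicInt

variable {p : ℕ} [hp : Fact p.Prime] {κ : Type*}

def ValuationTendsToTop (b : κ → ℤ_[p]) (s : κ → ℕ) : Prop :=
  ∀ t : ℝ, ∃ M : ℕ, ∀ k, M ≤ s k → ‖b k‖ ≤ (p : ℝ) ^ (-t)

def LinearOrderBound (a : κ → ℤ_[p]) (s : κ → ℕ) : Prop :=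
  ∃ α β : ℝ, 0 < α ∧ ∀ i : ℕ, ∀ k, ¬ (p : ℤ_[p]) ^ (i + 1) ∣ a k → (s k : ℝ) ≤ α * i + β

def LinearValuationBound (a : κ → ℤ_[p]) (s : κ → ℕ) : Prop :=
  ∃ η c : ℝ, 0 < η ∧ ∀ k, ‖a k‖ ≤ (p : ℝ) ^ (-(η * s k + c))

def IsDivisibleByLevelFactorials {ι : Type*} [Fintype ι] (a : (ι →₀ ℕ) → ℤ_[p]) : Prop :=
  ∃ m : ℕ, ∃ b : (ι →₀ ℕ) → ℤ_[p], (∀ k, a k = (∏ i, ((k i / p ^ m)! : ℤ_[p])) * b k) ∧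
    ValuationTendsToTop b fun k => ∑ i, k i

theorem linearOrderBound_iff_linearValuationBound (a : κ → ℤ_[p]) (s : κ → ℕ) :
    LinearOrderBound a s ↔ LinearValuationBound a s := by
  simp only [LinearValuationBound, norm_le_rpow_neg_iff]
  constructor
  · rintro ⟨α, β, hα, h⟩
    refine ⟨α⁻¹, -β / α, inv_pos.2 hα, fun k i hi => ?_⟩
    have := h i k hi
    rw [inv_mul_eq_div, ← add_div, div_le_iff₀ hα]
    linarith
  · rintro ⟨η, c, hη, h⟩
    refine ⟨η⁻¹, -c / η, inv_pos.2 hη, fun i k hi => ?_⟩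
    have := h k i hi
    rw [inv_mul_eq_div, ← add_div, le_div_iff₀ hη]
    linarith

theorem LinearValuationBound.valuationTendsToTop {a : κ → ℤ_[p]} {s : κ → ℕ}
    (h : LinearValuationBound a s) : ValuationTendsToTop a s := by
  obtain ⟨η, c, hη, ha⟩ := h
  intro t
  obtain ⟨M, hM⟩ := exists_nat_gt ((t - c) / η)
  refine ⟨M, fun k hk => (ha k).trans ?_⟩
  have : (t - c) / η ≤ s k := hM.le.trans (by exact_mod_cast hk)
  rw [div_le_iff₀ hη] at this
  rw [Real.rpow_le_rpow_left_iff (Nat.one_lt_cast.2 hp.out.one_lt)]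
  linarith

variable {ι : Type*} [Fintype ι]

theorem IsDivisibleByLevelFactorials.linearValuationBound {a : (ι →₀ ℕ) → ℤ_[p]}
    (h : IsDivisibleByLevelFactorials a) : LinearValuationBound a fun k => ∑ i, k i := by
  obtain ⟨m, b, hab, -⟩ := h
  refine ⟨((p : ℝ) ^ (m + 1))⁻¹, -Fintype.card ι,
    inv_pos.2 (pow_pos (Nat.cast_pos.2 hp.out.pos) _), fun k => ?_⟩
  have hdiv : ∀ i, k i / p ^ m / p = k i / p ^ (m + 1) := fun i => by
    rw [Nat.div_div_eq_div_mul, pow_succ]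
  calc ‖a k‖ ≤ ‖∏ i, ((k i / p ^ m)! : ℤ_[p])‖ := by
        rw [hab k, norm_mul]
        exact mul_le_of_le_one_right (norm_nonneg _) (norm_le_one _)
    _ ≤ (p : ℝ) ^ (-((∑ i, k i / p ^ (m + 1) : ℕ) : ℝ)) := by
        simpa only [hdiv] using norm_prod_factorial_le (p := p) fun i => k i / p ^ m
    _ ≤ _ := by
        rw [Real.rpow_le_rpow_left_iff (Nat.one_lt_cast.2 hp.out.one_lt), neg_le_neg_iff,
          inv_mul_eq_div, ← sub_eq_add_neg]
        exact_mod_cast Nat.cast_sum_div_sub_card_le (fun i => k i) (p ^ (m + 1))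

theorem LinearValuationBound.isDivisibleByLevelFactorials {a : (ι →₀ ℕ) → ℤ_[p]}
    (h : LinearValuationBound a fun k => ∑ i, k i) : IsDivisibleByLevelFactorials a := by
  obtain ⟨η, c, hη, ha⟩ := h
  have hp1 : (1 : ℝ) < p := Nat.one_lt_cast.2 hp.out.one_lt
  obtain ⟨n, hn⟩ := pow_unbounded_of_one_lt (2 * (1 + |c|) / η) hp1
  rw [div_lt_iff₀ hη] at hn
  have key k : ∃ b, a k = (∏ i, ((k i / p ^ n)! : ℤ_[p])) * b ∧
      ‖b‖ ≤ (p : ℝ) ^ (-(η / 2 * (∑ i, k i : ℕ) + c)) := by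
    set D := ∏ i, ((k i / p ^ n)! : ℤ_[p])
    set S : ℕ := ∑ i, k i
    set Q : ℕ := ∑ i, k i / p ^ n
    have hD : (p : ℝ) ^ (-(Q : ℝ)) ≤ ‖D‖ :=
      rpow_neg_sum_le_norm_prod_factorial fun i => k i / p ^ n
    have hQS : (p : ℝ) ^ n * Q ≤ S := by
      rw [← le_div_iff₀' (by positivity)]
      exact_mod_cast Nat.cast_sum_div_le (fun i => k i) (p ^ n)
    have hQ : (Q : ℝ) ≤ η / 2 * S := by
      nlinarith [mul_le_mul_of_nonneg_left hQS hη.le, abs_nonneg c,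
        (Nat.cast_nonneg Q : (0 : ℝ) ≤ Q)]
    have hD0 : D ≠ 0 :=
      Finset.prod_ne_zero_iff.2 fun i _ => Nat.cast_ne_zero.2 (Nat.factorial_ne_zero _)
    refine exists_eq_mul_norm_le hD0 ?_ ?_
    · rcases Nat.eq_zero_or_pos Q with hQ0 | hQ0
      · rw [hQ0, Nat.cast_zero, neg_zero, Real.rpow_zero] at hD
        exact (norm_le_one _).trans hD
      · have hQc : (Q : ℝ) ≤ η * S + c := by
          have : (1 : ℝ) ≤ Q := by exact_mod_cast hQ0
          nlinarith [mul_le_mul_of_nonneg_left hQS hη.le, neg_abs_le c]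
        refine (ha k).trans (le_trans ?_ hD)
        rwa [Real.rpow_le_rpow_left_iff hp1, neg_le_neg_iff]
    · calc ‖a k‖ ≤ (p : ℝ) ^ (-(η * S + c)) := ha k
        _ ≤ (p : ℝ) ^ (-(Q : ℝ)) * (p : ℝ) ^ (-(η / 2 * S + c)) := by
          rw [← Real.rpow_add (by positivity), Real.rpow_le_rpow_left_iff hp1]
          linarith
        _ ≤ ‖D‖ * (p : ℝ) ^ (-(η / 2 * S + c)) := by gcongr
  choose b hab hb using key
  exact ⟨n, b, hab, LinearValuationBound.valuationTendsToTop ⟨η / 2, c, half_pos hη, hb⟩⟩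

end Conditions

theorem stmt_7_general (p : ℕ) [Fact p.Prime] (N : ℕ)
    (a : (Fin N →₀ ℕ) → ℤ_[p]) :
    ((∃ m : ℕ, ∃ b : (Fin N →₀ ℕ) → ℤ_[p],
        (∀ k : Fin N →₀ ℕ,
          a k = (∏ i, (Nat.factorial (k i / p ^ m) : ℤ_[p])) * b k) ∧
        ∀ t : ℝ, ∃ M : ℕ, ∀ k : Fin N →₀ ℕ,
          M ≤ ∑ i, k i → ‖b k‖ ≤ (p : ℝ) ^ (-t)) ↔
      (∃ α β : ℝ, 0 < α ∧ ∀ i : ℕ, ∀ k : Fin N →₀ ℕ,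
        ¬ (p : ℤ_[p]) ^ (i + 1) ∣ a k → ((∑ i, k i : ℕ) : ℝ) ≤ α * i + β)) ∧
    ((∃ α β : ℝ, 0 < α ∧ ∀ i : ℕ, ∀ k : Fin N →₀ ℕ,
        ¬ (p : ℤ_[p]) ^ (i + 1) ∣ a k → ((∑ i, k i : ℕ) : ℝ) ≤ α * i + β) ↔
      (∃ η c : ℝ, 0 < η ∧ ∀ k : Fin N →₀ ℕ,
        ‖a k‖ ≤ (p : ℝ) ^ (-(η * (∑ i, k i : ℕ) + c)))) := by
  have h23 := linearOrderBound_iff_linearValuationBound a fun k => ∑ i, k i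
  have h13 : IsDivisibleByLevelFactorials a ↔ LinearValuationBound a fun k => ∑ i, k i :=
    ⟨IsDivisibleByLevelFactorials.linearValuationBound,
      LinearValuationBound.isDivisibleByLevelFactorials⟩
  exact ⟨h13.trans h23.symm, h23⟩

/-- Characterization of the weakly completed distribution algebra `D†(𝒢)` inside
the `p`-adic completion of the classical distribution algebra, in terms of the
coefficients `a_k ∈ ℤ_p` (with `‖x‖ = p^{-v_p(x)}`, so `v_p(x) ≥ t ↔ ‖x‖ ≤ p^{-t}`):
given that `v_p(a_k) → ∞` as `|k| → ∞`, the following are equivalent: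
(i) for some level `m`, each `a_k` is divisible by `∏ᵢ q^{(m)}_{kᵢ}!` with the
valuations of the quotients tending to `∞`;
(ii) for some `α > 0`, `β`, whenever `p^{i+1} ∤ a_k` one has `|k| ≤ α·i + β`;
(iii) for some `η > 0`, `c`, one has `v_p(a_k) ≥ η·|k| + c` for all `k`. -/
theorem stmt_7 (p : ℕ) [Fact p.Prime] (N : ℕ) (hN : 1 ≤ N)
    (a : (Fin N →₀ ℕ) → ℤ_[p])
    (ha : ∀ t : ℝ, ∃ M : ℕ, ∀ k : Fin N →₀ ℕ,
      M ≤ ∑ i, k i → ‖a k‖ ≤ (p : ℝ) ^ (-t)) :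
    ((∃ m : ℕ, ∃ b : (Fin N →₀ ℕ) → ℤ_[p],
        (∀ k : Fin N →₀ ℕ,
          a k = (∏ i, (Nat.factorial (k i / p ^ m) : ℤ_[p])) * b k) ∧
        ∀ t : ℝ, ∃ M : ℕ, ∀ k : Fin N →₀ ℕ,
          M ≤ ∑ i, k i → ‖b k‖ ≤ (p : ℝ) ^ (-t)) ↔
      (∃ α β : ℝ, 0 < α ∧ ∀ i : ℕ, ∀ k : Fin N →₀ ℕ,
        ¬ (p : ℤ_[p]) ^ (i + 1) ∣ a k → ((∑ i, k i : ℕ) : ℝ) ≤ α * i + β)) ∧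
    ((∃ α β : ℝ, 0 < α ∧ ∀ i : ℕ, ∀ k : Fin N →₀ ℕ,
        ¬ (p : ℤ_[p]) ^ (i + 1) ∣ a k → ((∑ i, k i : ℕ) : ℝ) ≤ α * i + β) ↔
      (∃ η c : ℝ, 0 < η ∧ ∀ k : Fin N →₀ ℕ,
        ‖a k‖ ≤ (p : ℝ) ^ (-(η * (∑ i, k i : ℕ) + c)))) :=
  stmt_7_general p N a
end

section
/- Let R be a commutative ring and A a commutative R-bialgebra with comultiplication Δ : A → A ⊗_R A and counit ε : A → R (an R-algebra homomorphism). Let I := ker ε be the augmentation ideal, and for n ∈ ℕ let Dist_n := { u ∈ Hom_R(A, R) : u vanishes on the ideal power I^{n+1} }. Equip Hom_R(A,R) with the convolution product u * v := mult_R ∘ (u ⊗ v) ∘ Δ, where mult_R : R ⊗_R R → R is multiplication. Then for all n, n' ∈ ℕ, if u ∈ Dist_n and v ∈ Dist_{n'}, then u * v ∈ Dist_{n+n'}. -/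
open scoped TensorProduct

/-- Multiplicativity of the order filtration on the distribution algebra of a
commutative bialgebra `A` over `R`: if `u` vanishes on `I^(n+1)` and `v` on
`I^(n'+1)` (where `I = ker ε` is the augmentation ideal), then their
convolution product `mult ∘ (u ⊗ v) ∘ Δ` vanishes on `I^(n+n'+1)`. -/
theorem stmt_10 (R : Type*) [CommRing R] (A : Type*) [CommRing A]
    [Bialgebra R A] (n n' : ℕ) (u v : A →ₗ[R] R)
    (hu : ∀ x ∈ (RingHom.ker (Bialgebra.counitAlgHom R A)) ^ (n + 1), u x = 0)
    (hv : ∀ x ∈ (RingHom.ker (Bialgebra.counitAlgHom R A)) ^ (n' + 1), v x = 0) :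
    ∀ x ∈ (RingHom.ker (Bialgebra.counitAlgHom R A)) ^ (n + n' + 1),
      (LinearMap.mul' R R ∘ₗ TensorProduct.map u v ∘ₗ
        (Coalgebra.comul : A →ₗ[R] A ⊗[R] A)) x = 0 := by
  set I : Ideal A := RingHom.ker (Bialgebra.counitAlgHom R A) with hI
  -- the filtration on `A ⊗ A`
  set s : ℕ → Set (A ⊗[R] A) := fun N =>
    {z | ∃ i j : ℕ, ∃ x y : A, i + j = N ∧ x ∈ I ^ i ∧ y ∈ I ^ j ∧ z = x ⊗ₜ[R] y} with hs
  set E : ℕ → Submodule R (A ⊗[R] A) := fun N => Submodule.span R (s N) with hE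
  -- multiplicativity of the filtration
  have mulE : ∀ N M : ℕ, E N * E M ≤ E (N + M) := by
    intro N M
    rw [hE, Submodule.span_mul_span, Submodule.span_le]
    rintro z hz
    rw [Set.mem_mul] at hz
    obtain ⟨a, ha, b, hb, rfl⟩ := hz
    obtain ⟨i, j, x, y, hij, hx, hy, rfl⟩ := ha
    obtain ⟨i', j', x', y', hij', hx', hy', rfl⟩ := hb
    apply Submodule.subset_span
    exact ⟨i + i', j + j', x * x', y * y', by omega,
      by rw [pow_add]; exact Ideal.mul_mem_mul hx hx',
      by rw [pow_add]; exact Ideal.mul_mem_mul hy hy',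
      Algebra.TensorProduct.tmul_mul_tmul x x' y y'⟩
  -- base case: comul of an element of I lands in E 1
  have base : ∀ a ∈ I, (Coalgebra.comul (R := R) (A := A)) a ∈ E 1 := by
    intro a ha
    set π : A →ₗ[R] A := LinearMap.id -
      (Algebra.linearMap R A) ∘ₗ (Coalgebra.counit : A →ₗ[R] R) with hπ
    have hπI : ∀ c : A, π c ∈ I := by
      intro c
      rw [hI, RingHom.mem_ker]
      simp [hπ, Bialgebra.counitAlgHom_apply]
    have hdecomp : (Coalgebra.comul (R := R) (A := A)) a =
        (π.rTensor A) (Coalgebra.comul a) +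
        (((Algebra.linearMap R A) ∘ₗ
          (Coalgebra.counit : A →ₗ[R] R)).rTensor A) (Coalgebra.comul a) := by
      rw [← LinearMap.add_apply, ← LinearMap.rTensor_add, hπ, sub_add_cancel,
        LinearMap.rTensor_id, LinearMap.id_apply]
    rw [hdecomp]
    apply Submodule.add_mem
    · -- first summand: in E 1 since π maps into I
      have : ∀ z : A ⊗[R] A, (π.rTensor A) z ∈ E 1 := by
        intro z
        induction z using TensorProduct.induction_on with
        | zero => simp
        | tmul c d =>
          rw [LinearMap.rTensor_tmul]
          exact Submodule.subset_span ⟨1, 0, π c, d, rfl, by simpa using hπI c,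
            by simp, rfl⟩
        | add z₁ z₂ h₁ h₂ => rw [map_add]; exact Submodule.add_mem _ h₁ h₂
      exact this _
    · -- second summand: equals 1 ⊗ₜ a
      have : (((Algebra.linearMap R A) ∘ₗ
          (Coalgebra.counit : A →ₗ[R] R)).rTensor A) (Coalgebra.comul a)
          = (1 : A) ⊗ₜ[R] a := by
        rw [LinearMap.rTensor_comp, LinearMap.comp_apply,
          Coalgebra.rTensor_counit_comul, LinearMap.rTensor_tmul]
        simp
      rw [this]
      exact Submodule.subset_span ⟨0, 1, 1, a, rfl, by simp, by simpa using ha, rfl⟩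
  -- main claim: comul maps I^(N+1) into E (N+1)
  have main : ∀ N : ℕ, ∀ x ∈ I ^ (N + 1),
      (Coalgebra.comul (R := R) (A := A)) x ∈ E (N + 1) := by
    intro N
    induction N with
    | zero => intro x hx; rw [pow_one] at hx; exact base x hx
    | succ N ih =>
      intro x hx
      have hx' : x ∈ I * I ^ (N + 1) := by rw [← pow_succ']; exact hx
      refine Submodule.mul_induction_on hx' (fun a ha b hb => ?_)
        (fun y z hy hz => by rw [map_add]; exact Submodule.add_mem _ hy hz)
      rw [Bialgebra.comul_mul]
      have : (1 : ℕ) + (N + 1) = N + 1 + 1 := by omega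
      exact this ▸ mulE 1 (N + 1) (Submodule.mul_mem_mul (base a ha) (ih b hb))
  -- conclude
  intro x hx
  have hmem : (Coalgebra.comul (R := R) (A := A)) x ∈ E (n + n' + 1) := main _ x hx
  rw [LinearMap.comp_apply, LinearMap.comp_apply]
  set φ : A ⊗[R] A →ₗ[R] R := LinearMap.mul' R R ∘ₗ TensorProduct.map u v with hφ
  have : φ (Coalgebra.comul x) = 0 := by
    refine Submodule.span_induction (fun z hz => ?_) (by simp)
      (fun z w _ _ h₁ h₂ => by rw [map_add, h₁, h₂, add_zero])
      (fun r z _ h => by rw [map_smul, h, smul_zero]) hmem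
    obtain ⟨i, j, a, b, hij, ha, hb, rfl⟩ := hz
    rw [hφ, LinearMap.comp_apply, TensorProduct.map_tmul, LinearMap.mul'_apply]
    rcases Nat.lt_or_ge i (n + 1) with hi | hi
    · have hj : n' + 1 ≤ j := by omega
      have : b ∈ I ^ (n' + 1) := Ideal.pow_le_pow_right hj hb
      rw [hv b this, mul_zero]
    · have : a ∈ I ^ (n + 1) := Ideal.pow_le_pow_right hi ha
      rw [hu a this, zero_mul]
  simpa [hφ] using this
end

section
/- Let R be a commutative ring and A a commutative R-bialgebra with comultiplication Δ : A → A ⊗_R A and counit ε : A → R (an R-algebra homomorphism). Let I := ker ε, for n ∈ ℕ let Dist_n := { u ∈ Hom_R(A, R) : u vanishes on I^{n+1} }, and equip Hom_R(A,R) with the convolution product u * v := mult_R ∘ (u ⊗ v) ∘ Δ. Then for all n, n' ∈ ℕ with n + n' ≥ 1, if u ∈ Dist_n and v ∈ Dist_{n'}, then the commutator u * v − v * u lies in Dist_{n+n'−1}. -/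
open scoped TensorProduct
open TensorProduct Algebra.TensorProduct Coalgebra Bialgebra

/-!
Let `I = ker ε` and `J = I ⊗ A + A ⊗ I`, and let `τ` be the flip of `A ⊗ A`. The commutator
`(u * v - v * u) x` equals `(u ⊗ v) (Δ x - τ (Δ x))`. For `x ∈ I` we have
`Δ x ≡ x ⊗ 1 + 1 ⊗ x` modulo `I ⊗ I`, and the right side is `τ`-invariant; so the ring maps `Δ` and
`τ ∘ Δ` send `I` into `J` and agree on `I` modulo `J²`. The Leibniz rule
`f (ab) - g (ab) = (f a - g a) f b + g a (f b - g b)` then gives `Δ x - τ (Δ x) ∈ J ^ (k + 1)` for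
`x ∈ I ^ k`, `k ≥ 1`. Finally `J ^ (n + n' + 1) ⊆ I ^ (n + 1) ⊗ A + A ⊗ I ^ (n' + 1)`, on which
`u ⊗ v` vanishes.
-/

namespace Ideal

variable {S : Type*} [CommSemiring S] {I J : Ideal S}

theorem sup_pow_add_add_one_le (n m : ℕ) :
    (I ⊔ J) ^ (n + m + 1) ≤ I ^ (n + 1) ⊔ J ^ (m + 1) := by
  rw [← add_eq_sup, ← add_eq_sup, add_pow, sum_eq_sup]
  refine Finset.sup_le fun i hi => ?_
  rcases le_or_gt (n + 1) i with hn | hn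
  · exact mul_le_left.trans (mul_le_left.trans
      ((pow_le_pow_right hn).trans le_sup_left))
  · refine mul_le_left.trans (mul_le_right.trans
      ((pow_le_pow_right ?_).trans le_sup_right))
    rw [Finset.mem_range] at hi
    omega

theorem sub_mem_pow_add_two_of_mem_pow_add_one {A B : Type*} [CommRing A] [CommRing B]
    {f g : A →+* B} {I : Ideal A} {J : Ideal B} (hf : I.map f ≤ J) (hg : I.map g ≤ J)
    (hfg : ∀ x ∈ I, f x - g x ∈ J ^ 2) (k : ℕ) :
    ∀ x ∈ I ^ (k + 1), f x - g x ∈ J ^ (k + 2) := by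
  induction k with
  | zero => simpa using hfg
  | succ k ih =>
    intro x hx
    rw [pow_succ] at hx
    refine Submodule.mul_induction_on hx (fun a ha b hb => ?_) (fun y z hy hz => ?_)
    · have hga : g a ∈ J ^ (k + 1) := pow_right_mono hg (k + 1)
        (Ideal.map_pow g I (k + 1) ▸ mem_map_of_mem g ha)
      have hfb : f b ∈ J := hf (mem_map_of_mem f hb)
      have h₁ := mul_mem_mul (ih a ha) hfb
      have h₂ := mul_mem_mul hga (hfg b hb)
      rw [← pow_succ] at h₁
      rw [← pow_add] at h₂
      have leibniz : f (a * b) - g (a * b) = (f a - g a) * f b + g a * (f b - g b) := by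
        simp only [map_mul]; ring
      exact leibniz ▸ add_mem h₁ h₂
    · rw [map_add, map_add, add_sub_add_comm]
      exact add_mem hy hz

end Ideal

section TensorIdeal

variable {R A B M N : Type*} [CommSemiring R] [Semiring A] [Semiring B] [Algebra R A]
  [Algebra R B] [AddCommMonoid M] [Module R M] [AddCommMonoid N] [Module R N]

theorem TensorProduct.map_eq_zero_of_mem_map_includeLeft {I : Ideal A} {u : A →ₗ[R] M}
    (v : B →ₗ[R] N) (hu : ∀ x ∈ I, u x = 0) {z : A ⊗[R] B}
    (hz : z ∈ I.map (includeLeft : A →ₐ[R] A ⊗[R] B)) : map u v z = 0 := by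
  obtain ⟨w, rfl⟩ : z ∈ LinearMap.range ((I.restrictScalars R).subtype.rTensor B) :=
    (I.map_includeLeft_eq (R := R) (B := B)) ▸ hz
  have hu' : u ∘ₗ (I.restrictScalars R).subtype = 0 := LinearMap.ext fun x => hu x x.2
  rw [LinearMap.map_rTensor, hu', map_zero_left, LinearMap.zero_apply]

theorem TensorProduct.map_eq_zero_of_mem_map_includeRight {I : Ideal B} (u : A →ₗ[R] M)
    {v : B →ₗ[R] N} (hv : ∀ x ∈ I, v x = 0) {z : A ⊗[R] B}
    (hz : z ∈ I.map (includeRight : B →ₐ[R] A ⊗[R] B)) : map u v z = 0 := by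
  obtain ⟨w, rfl⟩ : z ∈ LinearMap.range ((I.restrictScalars R).subtype.lTensor A) :=
    (I.map_includeRight_eq (R := R) (A := A)) ▸ hz
  have hv' : v ∘ₗ (I.restrictScalars R).subtype = 0 := LinearMap.ext fun x => hv x x.2
  rw [LinearMap.map_lTensor, hv', map_zero_right, LinearMap.zero_apply]

theorem TensorProduct.map_mem_map_includeLeft_mul_map_includeRight {I : Ideal A} {J : Ideal B}
    {p : M →ₗ[R] A} {q : N →ₗ[R] B} (hp : ∀ x, p x ∈ I) (hq : ∀ y, q y ∈ J) (w : M ⊗[R] N) :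
    map p q w ∈ I.map (includeLeft : A →ₐ[R] A ⊗[R] B) * J.map includeRight := by
  induction w using TensorProduct.induction_on with
  | zero => simp
  | tmul x y =>
    rw [map_tmul, ← one_mul (q y), ← mul_one (p x), ← tmul_mul_tmul]
    exact Ideal.mul_mem_mul (Ideal.mem_map_of_mem _ (hp x)) (Ideal.mem_map_of_mem _ (hq y))
  | add w₁ w₂ h₁ h₂ => rw [map_add]; exact add_mem h₁ h₂

end TensorIdeal

namespace Bialgebra

variable {R A : Type*} [CommRing R] [CommRing A] [Bialgebra R A]

local notation "𝔪" => RingHom.ker (counitAlgHom R A)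
local notation "𝔪ₗ" => Ideal.map (includeLeft : A →ₐ[R] A ⊗[R] A) 𝔪
local notation "𝔪ᵣ" => Ideal.map (includeRight : A →ₐ[R] A ⊗[R] A) 𝔪

theorem comul_sub_tmul_one_sub_one_tmul_mem {x : A} (hx : x ∈ 𝔪) :
    comul x - x ⊗ₜ[R] 1 - 1 ⊗ₜ[R] x ∈ 𝔪ₗ * 𝔪ᵣ := by
  set π : A →ₗ[R] A := LinearMap.id - Algebra.linearMap R A ∘ₗ counit
  have hπ : ∀ a, π a ∈ 𝔪 := fun a => by simp [π, RingHom.mem_ker]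
  have hx' : counit (R := R) x = 0 := hx
  have hr : π.rTensor A (comul x) = comul x - 1 ⊗ₜ[R] x := by
    simp [π, LinearMap.rTensor_sub, LinearMap.rTensor_comp_apply, rTensor_counit_comul]
  have hl : π.lTensor A (comul x) = comul x - x ⊗ₜ[R] 1 := by
    simp [π, LinearMap.lTensor_sub, LinearMap.lTensor_comp_apply, lTensor_counit_comul]
  have hmap : map π π (comul x) = comul x - x ⊗ₜ[R] 1 - 1 ⊗ₜ[R] x := by
    rw [← LinearMap.lTensor_comp_rTensor, LinearMap.comp_apply, hr, map_sub, hl,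
      LinearMap.lTensor_tmul]
    simp [π, hx']
  exact hmap ▸ TensorProduct.map_mem_map_includeLeft_mul_map_includeRight hπ hπ _

theorem map_comul_le_sup : Ideal.map (comulAlgHom R A) 𝔪 ≤ 𝔪ₗ ⊔ 𝔪ᵣ := by
  rw [Ideal.map_le_iff_le_comap]
  intro x hx
  have hcross : comul x - x ⊗ₜ[R] 1 - 1 ⊗ₜ[R] x ∈ 𝔪ₗ ⊔ 𝔪ᵣ :=
    Ideal.mem_sup_left (Ideal.mul_le_left (comul_sub_tmul_one_sub_one_tmul_mem hx))
  have hl : x ⊗ₜ[R] (1 : A) ∈ 𝔪ₗ ⊔ 𝔪ᵣ := Ideal.mem_sup_left (Ideal.mem_map_of_mem includeLeft hx)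
  have hr : (1 : A) ⊗ₜ[R] x ∈ 𝔪ₗ ⊔ 𝔪ᵣ := Ideal.mem_sup_right (Ideal.mem_map_of_mem includeRight hx)
  have hsplit : comul x = (comul x - x ⊗ₜ[R] 1 - 1 ⊗ₜ[R] x) + x ⊗ₜ[R] 1 + 1 ⊗ₜ[R] x := by abel
  show comul x ∈ 𝔪ₗ ⊔ 𝔪ᵣ
  rw [hsplit]
  exact add_mem (add_mem hcross hl) hr

theorem map_comm_sup_le :
    Ideal.map (Algebra.TensorProduct.comm R A A : A ⊗[R] A →ₐ[R] A ⊗[R] A) (𝔪ₗ ⊔ 𝔪ᵣ) ≤ 𝔪ₗ ⊔ 𝔪ᵣ := by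
  rw [Ideal.map_sup, Ideal.map_mapₐ, Ideal.map_mapₐ, comm_comp_includeLeft, comm_comp_includeRight,
    sup_comm]

theorem comul_sub_comm_comul_mem_sq {x : A} (hx : x ∈ 𝔪) :
    comul x - Algebra.TensorProduct.comm R A A (comul x) ∈ (𝔪ₗ ⊔ 𝔪ᵣ) ^ 2 := by
  set w := comul x - x ⊗ₜ[R] 1 - 1 ⊗ₜ[R] x
  have hw : w ∈ (𝔪ₗ ⊔ 𝔪ᵣ) ^ 2 := by
    rw [pow_two]
    exact Ideal.mul_mono le_sup_left le_sup_right (comul_sub_tmul_one_sub_one_tmul_mem hx)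
  have hτw : Algebra.TensorProduct.comm R A A w ∈ (𝔪ₗ ⊔ 𝔪ᵣ) ^ 2 := by
    have := Ideal.mem_map_of_mem (Algebra.TensorProduct.comm R A A : A ⊗[R] A →ₐ[R] A ⊗[R] A) hw
    rw [Ideal.map_pow] at this
    exact Ideal.pow_right_mono map_comm_sup_le 2 this
  have hsymm : comul x - Algebra.TensorProduct.comm R A A (comul x) =
      w - Algebra.TensorProduct.comm R A A w := by
    simp only [w, map_sub, Algebra.TensorProduct.comm_tmul]
    abel
  exact hsymm ▸ sub_mem hw hτw

theorem comul_sub_comm_comul_mem_pow (k : ℕ) {x : A} (hx : x ∈ 𝔪 ^ (k + 1)) :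
    comul x - Algebra.TensorProduct.comm R A A (comul x) ∈ (𝔪ₗ ⊔ 𝔪ᵣ) ^ (k + 2) := by
  let τ : A ⊗[R] A →ₐ[R] A ⊗[R] A := Algebra.TensorProduct.comm R A A
  have hτ : Ideal.map (τ.comp (comulAlgHom R A)) 𝔪 ≤ 𝔪ₗ ⊔ 𝔪ᵣ := by
    rw [← Ideal.map_mapₐ]
    exact (Ideal.map_mono map_comul_le_sup).trans map_comm_sup_le
  exact Ideal.sub_mem_pow_add_two_of_mem_pow_add_one (f := (comulAlgHom R A : A →+* A ⊗[R] A))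
    (g := τ.comp (comulAlgHom R A)) map_comul_le_sup hτ
    (fun _ hy => comul_sub_comm_comul_mem_sq hy) k x hx

end Bialgebra

theorem stmt_11_general (R : Type*) [CommRing R] (A : Type*) [CommRing A]
    [Bialgebra R A] (n n' : ℕ) (u v : A →ₗ[R] R)
    (hu : ∀ x ∈ (RingHom.ker (Bialgebra.counitAlgHom R A)) ^ (n + 1), u x = 0)
    (hv : ∀ x ∈ (RingHom.ker (Bialgebra.counitAlgHom R A)) ^ (n' + 1), v x = 0) :
    ∀ x ∈ (RingHom.ker (Bialgebra.counitAlgHom R A)) ^ ((n + n' - 1) + 1),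
      (LinearMap.mul' R R ∘ₗ TensorProduct.map u v ∘ₗ
          (Coalgebra.comul : A →ₗ[R] A ⊗[R] A)) x -
        (LinearMap.mul' R R ∘ₗ TensorProduct.map v u ∘ₗ
          (Coalgebra.comul : A →ₗ[R] A ⊗[R] A)) x = 0 := by
  intro x hx
  set 𝔪 := RingHom.ker (counitAlgHom R A)
  have hcomm := comul_sub_comm_comul_mem_pow (n + n' - 1) hx
  have hle : (𝔪.map (includeLeft : A →ₐ[R] A ⊗[R] A) ⊔ 𝔪.map includeRight) ^ (n + n' - 1 + 2) ≤
      (𝔪 ^ (n + 1)).map (includeLeft : A →ₐ[R] A ⊗[R] A) ⊔ (𝔪 ^ (n' + 1)).map includeRight := by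
    rw [Ideal.map_pow, Ideal.map_pow]
    exact (Ideal.pow_le_pow_right (by omega)).trans (Ideal.sup_pow_add_add_one_le n n')
  obtain ⟨y, hy, z, hz, hyz⟩ := Submodule.mem_sup.mp (hle hcomm)
  have hswap : LinearMap.mul' R R (map v u (comul x)) =
      LinearMap.mul' R R (map u v (Algebra.TensorProduct.comm R A A (comul x))) :=
    (LinearMap.mul'_comm _).symm.trans (congrArg _ (map_comm u v _).symm)
  simp only [LinearMap.comp_apply]
  rw [hswap, ← map_sub, ← map_sub, ← hyz, map_add, map_eq_zero_of_mem_map_includeLeft v hu hy,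
    map_eq_zero_of_mem_map_includeRight u hv hz, add_zero, map_zero]

/-- Commutativity of the associated graded of the order filtration on the
distribution algebra of a commutative bialgebra `A` over `R`: if `u` vanishes
on `I^(n+1)` and `v` on `I^(n'+1)` (where `I = ker ε` is the augmentation
ideal) and `n + n' ≥ 1`, then the commutator `u*v − v*u` of their convolution
products vanishes on `I^((n+n'−1)+1)`. -/
theorem stmt_11 (R : Type*) [CommRing R] (A : Type*) [CommRing A]
    [Bialgebra R A] (n n' : ℕ) (hnn' : 1 ≤ n + n') (u v : A →ₗ[R] R)
    (hu : ∀ x ∈ (RingHom.ker (Bialgebra.counitAlgHom R A)) ^ (n + 1), u x = 0)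
    (hv : ∀ x ∈ (RingHom.ker (Bialgebra.counitAlgHom R A)) ^ (n' + 1), v x = 0) :
    ∀ x ∈ (RingHom.ker (Bialgebra.counitAlgHom R A)) ^ ((n + n' - 1) + 1),
      (LinearMap.mul' R R ∘ₗ TensorProduct.map u v ∘ₗ
          (Coalgebra.comul : A →ₗ[R] A ⊗[R] A)) x -
        (LinearMap.mul' R R ∘ₗ TensorProduct.map v u ∘ₗ
          (Coalgebra.comul : A →ₗ[R] A ⊗[R] A)) x = 0 :=
  stmt_11_general R A n n' u v hu hv
end

section
/- Fix a prime p and a natural number N ≥ 1, and for m, j ∈ ℕ write q_j^{(m)} := ⌊j / p^m⌋. For each m let D^(m) be the ℤ_p-submodule of ℚ_p[X_1,…,X_N] spanned by the elements ξ^⟨k⟩_{(m)} := (∏_{i=1}^N q^{(m)}_{k_i}!/k_i!) · X_1^{k_1}⋯X_N^{k_N} for k ∈ ℕ^N. Then: (a) for m ≤ m' one has D^(m) ⊆ D^(m'); and (b) the union ⋃_{m ∈ ℕ} D^(m) equals the ℤ_p-submodule of ℚ_p[X_1,…,X_N] spanned by the divided-power monomials X_1^{k_1}⋯X_N^{k_N}/(k_1!⋯k_N!)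 for k ∈ ℕ^N. -/
/-! For `m ≤ m'` one has `q^{(m')}_j ≤ q^{(m)}_j`, so
`ξ^⟨k⟩_{(m)} = (∏ q^{(m)}_{k_i}! / q^{(m')}_{k_i}!) • ξ^⟨k⟩_{(m')}` with a natural-number
coefficient; likewise `ξ^⟨k⟩_{(m)} = (∏ q^{(m)}_{k_i}!) • X^k/k!`. Conversely `X^k/k!` is itself
`ξ^⟨k⟩_{(m)}` as soon as `p^m` exceeds every `k_i`, since then all `q^{(m)}_{k_i}` vanish. -/

open scoped BigOperators

open Nat Submodule

theorem Submodule.span_range_le_span_range_of_nsmul {R M ι : Type*} [Semiring R]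
    [AddCommMonoid M] [Module R M] {f g : ι → M} (h : ∀ i, ∃ n : ℕ, f i = n • g i) :
    span R (Set.range f) ≤ span R (Set.range g) := by
  refine span_le.2 ?_
  rintro _ ⟨i, rfl⟩
  obtain ⟨n, hn⟩ := h i
  rw [hn]
  exact nsmul_mem (subset_span (Set.mem_range_self i)) n

theorem Nat.exists_forall_lt_pow {ι : Type*} [Fintype ι] {p : ℕ} (hp : 1 < p) (f : ι → ℕ) :
    ∃ m, ∀ i, f i < p ^ m :=
  ⟨∑ i, f i, fun i =>
    (Finset.single_le_sum (fun j _ => Nat.zero_le (f j)) (Finset.mem_univ i)).trans_lt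
      (Nat.lt_pow_self hp)⟩

section xiGa

variable (p : ℕ) [Fact p.Prime] (N : ℕ)

noncomputable def dividedMonomial (k : Fin N →₀ ℕ) : MvPolynomial (Fin N) ℚ_[p] :=
  (∏ i : Fin N, ((k i)! : ℚ_[p])⁻¹) • MvPolynomial.monomial k 1

variable {p N}

theorem xiGa_eq_nsmul_dividedMonomial (m : ℕ) (k : Fin N →₀ ℕ) :
    xiGa p m N k = (∏ i : Fin N, (k i / p ^ m)!) • dividedMonomial p N k := by
  rw [xiGa, dividedMonomial, ← Nat.cast_smul_eq_nsmul ℚ_[p], smul_smul, Nat.cast_prod,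
    ← Finset.prod_mul_distrib]
  simp only [div_eq_mul_inv]

theorem xiGa_eq_dividedMonomial_of_forall_lt {m : ℕ} {k : Fin N →₀ ℕ}
    (hk : ∀ i, k i < p ^ m) : xiGa p m N k = dividedMonomial p N k := by
  simp [xiGa_eq_nsmul_dividedMonomial, Nat.div_eq_of_lt (hk _)]

theorem xiGa_eq_nsmul_xiGa {m m' : ℕ} (h : m ≤ m') (k : Fin N →₀ ℕ) :
    xiGa p m N k = (∏ i : Fin N, (k i / p ^ m)! / (k i / p ^ m')!) • xiGa p m' N k := by
  have hp : 0 < p := (Fact.out : p.Prime).pos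
  have hq : ∀ i, k i / p ^ m' ≤ k i / p ^ m := fun i =>
    Nat.div_le_div_left (Nat.pow_le_pow_right hp h) (Nat.pow_pos hp)
  simp only [xiGa_eq_nsmul_dividedMonomial, smul_smul, ← Finset.prod_mul_distrib,
    Nat.div_mul_cancel (Nat.factorial_dvd_factorial (hq _))]

theorem monotone_span_range_xiGa :
    Monotone fun m => span ℤ_[p] (Set.range (xiGa p m N)) := fun _ _ h =>
  span_range_le_span_range_of_nsmul fun k => ⟨_, xiGa_eq_nsmul_xiGa h k⟩

theorem iSup_span_range_xiGa :
    ⨆ m, span ℤ_[p] (Set.range (xiGa p m N)) =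
      span ℤ_[p] (Set.range (dividedMonomial p N)) := by
  refine le_antisymm
    (iSup_le fun m => span_range_le_span_range_of_nsmul fun k =>
      ⟨_, xiGa_eq_nsmul_dividedMonomial m k⟩) (span_le.2 ?_)
  rintro _ ⟨k, rfl⟩
  obtain ⟨m, hm⟩ := Nat.exists_forall_lt_pow (Fact.out : p.Prime).one_lt k
  rw [← xiGa_eq_dividedMonomial_of_forall_lt hm]
  exact mem_iSup_of_mem m (subset_span (Set.mem_range_self k))

end xiGa

theorem stmt_12_general (p : ℕ) [Fact p.Prime] (N : ℕ) :
    (∀ m m' : ℕ, m ≤ m' →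
      Submodule.span ℤ_[p] (Set.range (xiGa p m N)) ≤
        Submodule.span ℤ_[p] (Set.range (xiGa p m' N))) ∧
    (⋃ m : ℕ,
        (Submodule.span ℤ_[p] (Set.range (xiGa p m N)) :
          Set (MvPolynomial (Fin N) ℚ_[p]))) =
      (Submodule.span ℤ_[p]
        (Set.range fun k : Fin N →₀ ℕ =>
          (∏ i : Fin N, ((Nat.factorial (k i) : ℚ_[p]))⁻¹) •
            MvPolynomial.monomial k (1 : ℚ_[p])) :
        Set (MvPolynomial (Fin N) ℚ_[p])) := by
  refine ⟨fun _ _ h => monotone_span_range_xiGa h, ?_⟩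
  rw [← coe_iSup_of_directed _ monotone_span_range_xiGa.directed_le, iSup_span_range_xiGa]
  rfl

/-- The lattices `D^(m)(𝔾_a^N) ⊆ ℚ_p[X_1,…,X_N]` increase with the level `m`,
and their union is the classical distribution algebra `Dist(𝔾_a^N)`, i.e. the
`ℤ_p`-span of the divided-power monomials `X^k/k!`. -/
theorem stmt_12 (p : ℕ) [Fact p.Prime] (N : ℕ) (hN : 1 ≤ N) :
    (∀ m m' : ℕ, m ≤ m' →
      Submodule.span ℤ_[p] (Set.range (xiGa p m N)) ≤
        Submodule.span ℤ_[p] (Set.range (xiGa p m' N))) ∧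
    (⋃ m : ℕ,
        (Submodule.span ℤ_[p] (Set.range (xiGa p m N)) :
          Set (MvPolynomial (Fin N) ℚ_[p]))) =
      (Submodule.span ℤ_[p]
        (Set.range fun k : Fin N →₀ ℕ =>
          (∏ i : Fin N, ((Nat.factorial (k i) : ℚ_[p]))⁻¹) •
            MvPolynomial.monomial k (1 : ℚ_[p])) :
        Set (MvPolynomial (Fin N) ℚ_[p])) :=
  stmt_12_general p N
end
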